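/- arXiv:2406.00292 — 2 statements merged into one kernel-verified Lean document; each statement's English description precedes it below -/
import Mathlib

section
/- Let G be a graph with a perfect matching and let B be a maximal barrier of G. Then every connected component of G − B is factor-critical. -/
open SimpleGraph Set

universe u
variable {V : Type u}

/-- Number of odd components of a graph. -/
noncomputable def oddComps (G : SimpleGraph V) : ℕ :=
  Nat.card {c : G.ConnectedComponent // Odd (Nat.card c.supp)}

/-- `S` is a barrier of `G`: the number of odd components of `G − S` equals `|S|`. -/
def IsBarrier (G : SimpleGraph V) (S : Set V) : Prop :=
  oddComps (G.induce Sᶜ) = S.ncard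

/-- `G` has a perfect matching. -/
def HasPM (G : SimpleGraph V) : Prop :=
  ∃ M : Subgraph G, M.IsPerfectMatching

/-- `G` is matching covered. -/
def MatchingCovered (G : SimpleGraph V) : Prop :=
  G.Connected ∧ G.edgeSet.Nonempty ∧
    ∀ e ∈ G.edgeSet, ∃ M : Subgraph G, M.IsPerfectMatching ∧ e ∈ M.edgeSet

/-- An edge `e` of a matching covered graph `G` is removable. -/
def Removable (G : SimpleGraph V) (e : Sym2 V) : Prop :=
  e ∈ G.edgeSet ∧ MatchingCovered (G.deleteEdges {e})

/-- `G` is 3-connected. -/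
def ThreeConnected (G : SimpleGraph V) : Prop :=
  4 ≤ Nat.card V ∧ ∀ S : Set V, S.ncard ≤ 2 → (G.induce Sᶜ).Connected

/-- A brick. -/
def IsBrick (G : SimpleGraph V) : Prop :=
  ThreeConnected G ∧ ∀ x y : V, x ≠ y → HasPM (G.induce ({x, y} : Set V)ᶜ)

/-- neighbours outside `S` of vertices of `S`. -/
def Nbrs (G : SimpleGraph V) (S : Set V) : Set V :=
  {v | v ∉ S ∧ ∃ u ∈ S, G.Adj u v}

/-- factor-critical graph. -/
def FactorCritical (G : SimpleGraph V) : Prop :=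
  ∀ v : V, HasPM (G.induce ({v} : Set V)ᶜ)

/-- `(U, W)` is a bipartition of `G`. -/
def IsBipartition (G : SimpleGraph V) (U W : Set V) : Prop :=
  Disjoint U W ∧ U ∪ W = Set.univ ∧
    ∀ a b : V, G.Adj a b → (a ∈ U ∧ b ∈ W) ∨ (a ∈ W ∧ b ∈ U)

/-! If a component `C` of `G - B` had a vertex `v` with no perfect matching of `C - v`, Tutte's
theorem would give `S ⊆ C - v` with more than `|S|` odd components in `C - v - S`; by parity
`T = S ∪ {v}` then leaves at least `|T|` more odd components in `G - (B ∪ T)` than in `G - B`.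
As `G` has a perfect matching, no set leaves more odd components than its size, so `B ∪ T` is
a barrier strictly containing `B`. -/

namespace SimpleGraph

variable {α β : Type*} {K : SimpleGraph α} {L : SimpleGraph β}

lemma oddComps_congr (φ : K ≃g L) : oddComps K = oddComps L :=
  Nat.card_congr <| φ.connectedComponentEquiv.subtypeEquiv fun c => by
    rw [Nat.card_congr (ConnectedComponent.isoEquivSupp φ c)]

lemma oddComps_eq_ncard_oddComponents (K : SimpleGraph α) :
    oddComps K = K.oddComponents.ncard := by
  simp only [oddComps, oddComponents, ← Nat.card_coe_set_eq (ConnectedComponent.supp _)]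
  rfl

lemma oddComps_mod_two [Finite α] (K : SimpleGraph α) : oddComps K % 2 = Nat.card α % 2 := by
  have := K.odd_ncard_oddComponents
  rw [← oddComps_eq_ncard_oddComponents, Nat.odd_iff, Nat.odd_iff] at this
  omega

lemma oddComps_le_one (hK : K.Connected) : oddComps K ≤ 1 :=
  have := hK.preconnected.subsingleton_connectedComponent
  Finite.card_le_one_iff_subsingleton.mpr inferInstance

lemma oddComps_induce_induce (s : Set α) (u : Set s) :
    oddComps ((K.induce s).induce u) = oddComps (K.induce (Subtype.val '' u)) := by
  let ι := (Embedding.induce s).comp (Embedding.induce (G := K.induce s) u)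
  have hι : range ι = Subtype.val '' u := by
    ext x
    constructor
    · rintro ⟨⟨y, hy⟩, rfl⟩
      exact ⟨y, hy, rfl⟩
    · rintro ⟨y, hy, rfl⟩
      exact ⟨⟨y, hy⟩, rfl⟩
  rw [oddComps_congr (Embedding.isoInduceRange ι), hι]

def Subgraph.deleteVertsTopIso (K : SimpleGraph α) (S : Set α) :
    ((⊤ : K.Subgraph).deleteVerts S).coe ≃g K.induce Sᶜ where
  toEquiv := Equiv.setCongr (by simp [Set.compl_eq_univ_sdiff])
  map_rel_iff' := by
    rintro ⟨a, ha⟩ ⟨b, hb⟩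
    simp only [Equiv.setCongr_apply, Subgraph.coe_adj, Subgraph.deleteVerts_adj,
      Subgraph.top_adj, Subgraph.verts_top, Set.mem_univ, true_and]
    exact ⟨fun h => ⟨ha.2, hb.2, h⟩, fun h => h.2.2⟩

lemma hasPM_iff_forall_oddComps_le [Finite α] :
    HasPM K ↔ ∀ S : Set α, oddComps (K.induce Sᶜ) ≤ S.ncard := by
  simp only [HasPM, tutte, IsTutteViolator, not_lt,
    ← oddComps_congr (Subgraph.deleteVertsTopIso K _), oddComps_eq_ncard_oddComponents]

section Closed

variable {s : Set α}

lemma Reachable.induce_of_closed (hs : ∀ ⦃x y⦄, K.Adj x y → x ∈ s → y ∈ s) {x y : α}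
    (h : K.Reachable x y) (hx : x ∈ s) :
    ∃ hy : y ∈ s, (K.induce s).Reachable ⟨x, hx⟩ ⟨y, hy⟩ := by
  classical
  obtain ⟨p⟩ := h
  have hp : ∀ z ∈ p.support, z ∈ s := by
    intro z hz
    by_contra hzs
    obtain ⟨d, -, hd, hd'⟩ := (p.takeUntil z hz).exists_boundary_dart s hx hzs
    exact hd' (hs d.adj hd)
  exact ⟨hp y p.end_mem_support, ⟨p.induce s hp⟩⟩

lemma ConnectedComponent.supp_map_induce_of_closed
    (hs : ∀ ⦃x y⦄, K.Adj x y → x ∈ s → y ∈ s) (c : (K.induce s).ConnectedComponent) :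
    (c.map (Embedding.induce s).toHom).supp = Subtype.val '' c.supp := by
  induction c using ConnectedComponent.ind with | h x => ?_
  ext y
  simp only [ConnectedComponent.map_mk, Set.mem_image, ConnectedComponent.mem_supp_iff,
    ConnectedComponent.eq]
  constructor
  · intro hyx
    obtain ⟨hy, hxy⟩ := hyx.symm.induce_of_closed hs x.2
    exact ⟨⟨y, hy⟩, hxy.symm, rfl⟩
  · rintro ⟨y, hyx, rfl⟩
    exact hyx.map (Embedding.induce s).toHom

variable (s) in
def ConnectedComponent.mapInduceSum :
    (K.induce s).ConnectedComponent ⊕ (K.induce sᶜ).ConnectedComponent → K.ConnectedComponent :=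
  Sum.elim (·.map (Embedding.induce s).toHom) (·.map (Embedding.induce sᶜ).toHom)

lemma ConnectedComponent.bijective_mapInduceSum (hs : ∀ ⦃x y⦄, K.Adj x y → x ∈ s → y ∈ s) :
    Function.Bijective (mapInduceSum (K := K) s) := by
  have hs' : ∀ ⦃x y⦄, K.Adj x y → x ∈ sᶜ → y ∈ sᶜ := fun x y h hx hy => hx (hs h.symm hy)
  refine ⟨?_, fun c => ?_⟩
  · have hsides (c : (K.induce s).ConnectedComponent) (d : (K.induce sᶜ).ConnectedComponent) :
        Subtype.val '' c.supp ≠ Subtype.val '' d.supp := by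
      intro h
      obtain ⟨x, hx⟩ := c.nonempty_supp
      obtain ⟨y, -, hyx⟩ : x.1 ∈ Subtype.val '' d.supp := h ▸ ⟨x, hx, rfl⟩
      exact y.2 (hyx ▸ x.2)
    have hval := Set.image_injective.mpr (Subtype.val_injective (p := (· ∈ s)))
    have hval' := Set.image_injective.mpr (Subtype.val_injective (p := (· ∈ sᶜ)))
    rintro (c | c) (d | d) hcd <;> have hsupp := congrArg ConnectedComponent.supp hcd <;>
      simp only [mapInduceSum, Sum.elim_inl, Sum.elim_inr, supp_map_induce_of_closed hs,
        supp_map_induce_of_closed hs'] at hsupp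
    · exact congrArg _ (supp_injective (hval hsupp))
    · exact (hsides c d hsupp).elim
    · exact (hsides d c hsupp.symm).elim
    · exact congrArg _ (supp_injective (hval' hsupp))
  · induction c using ConnectedComponent.ind with | h x => ?_
    by_cases hx : x ∈ s
    exacts [⟨.inl (connectedComponentMk _ ⟨x, hx⟩), rfl⟩,
      ⟨.inr (connectedComponentMk _ ⟨x, hx⟩), rfl⟩]

lemma oddComps_eq_add_of_closed [Finite α] (hs : ∀ ⦃x y⦄, K.Adj x y → x ∈ s → y ∈ s) :
    oddComps K = oddComps (K.induce s) + oddComps (K.induce sᶜ) := by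
  have hs' : ∀ ⦃x y⦄, K.Adj x y → x ∈ sᶜ → y ∈ sᶜ := fun x y h hx hy => hx (hs h.symm hy)
  have hcard : ∀ i, Nat.card (ConnectedComponent.mapInduceSum (K := K) s i).supp =
      Sum.elim (fun c => Nat.card c.supp) (fun c => Nat.card c.supp) i := by
    rintro (c | c)
    · rw [ConnectedComponent.mapInduceSum, Sum.elim_inl,
        ConnectedComponent.supp_map_induce_of_closed hs]
      exact Nat.card_image_of_injective Subtype.val_injective _
    · rw [ConnectedComponent.mapInduceSum, Sum.elim_inr,
        ConnectedComponent.supp_map_induce_of_closed hs']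
      exact Nat.card_image_of_injective Subtype.val_injective _
  calc oddComps K
      = Nat.card {i // Odd (Sum.elim (fun c => Nat.card c.supp)
          (fun c => Nat.card c.supp) i)} :=
        Nat.card_congr <| Equiv.symm <|
          (Equiv.ofBijective _ (ConnectedComponent.bijective_mapInduceSum hs)).subtypeEquiv
            fun i => by rw [Equiv.ofBijective_apply, hcard]
    _ = oddComps (K.induce s) + oddComps (K.induce sᶜ) := by
        rw [Nat.card_congr Equiv.subtypeSum, Nat.card_sum]
        rfl

end Closed

lemma oddComps_induce_compl_add [Finite α] (C : K.ConnectedComponent) {T : Set α}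
    (hT : T ⊆ C.supp) :
    oddComps (K.induce Tᶜ) + oddComps (K.induce C.supp) =
      oddComps K + oddComps (K.induce (C.supp \ T)) := by
  have hK := oddComps_eq_add_of_closed fun _ _ h hx => C.mem_supp_of_adj_mem_supp hx h
  have hKT := oddComps_eq_add_of_closed (K := K.induce Tᶜ) (s := Subtype.val ⁻¹' C.supp)
    fun _ _ h hx => C.mem_supp_of_adj_mem_supp hx h
  have hC : Subtype.val '' (Subtype.val ⁻¹' C.supp : Set ↥Tᶜ) = C.supp \ T := by
    rw [Subtype.image_preimage_coe, Set.inter_comm, Set.sdiff_eq]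
  have hCc : Subtype.val '' (Subtype.val ⁻¹' C.supp : Set ↥Tᶜ)ᶜ = C.suppᶜ := by
    rw [Set.image_val_compl, Subtype.image_preimage_coe, Set.sdiff_self_inter,
      Set.sdiff_eq_compl_inter, Set.inter_eq_left.mpr (Set.compl_subset_compl.mpr hT)]
  rw [oddComps_induce_induce, oddComps_induce_induce, hC, hCc] at hKT
  omega

lemma exists_mem_ncard_add_oddComps_le [Finite β] (hL : L.Connected) {v : β}
    (hv : ¬ HasPM (L.induce {v}ᶜ)) :
    ∃ U : Set β, v ∈ U ∧ U.ncard + oddComps L ≤ oddComps (L.induce Uᶜ) := by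
  obtain ⟨S, hS⟩ : ∃ S : Set ↥({v}ᶜ : Set β),
      S.ncard < oddComps ((L.induce {v}ᶜ).induce Sᶜ) := by
    simpa [hasPM_iff_forall_oddComps_le] using hv
  refine ⟨insert v (Subtype.val '' S), Set.mem_insert v _, ?_⟩
  have hU : Subtype.val '' Sᶜ = (insert v (Subtype.val '' S))ᶜ := by
    rw [Set.image_val_compl, Set.sdiff_eq_compl_inter, ← Set.compl_union, Set.union_singleton]
  have hvS : v ∉ Subtype.val '' S := fun ⟨w, _, hw⟩ => w.2 hw
  rw [oddComps_induce_induce, hU] at hS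
  have hcard := Set.ncard_insert_of_notMem hvS
  rw [Set.ncard_image_of_injective _ Subtype.val_injective] at hcard
  -- If `|β|` is odd then `o(L - U) ≢ |U| (mod 2)`, which upgrades `|S| < o(L - U)` by one.
  have hparity := (L.induce (insert v (Subtype.val '' S))ᶜ).oddComps_mod_two
  have hparity' := L.oddComps_mod_two
  have hsplit := Set.ncard_add_ncard_compl (insert v (Subtype.val '' S))
  rw [← Nat.card_coe_set_eq (insert v (Subtype.val '' S))ᶜ] at hsplit
  have := oddComps_le_one hL
  omega

lemma exists_nonempty_ncard_add_oddComps_le [Finite α] (C : K.ConnectedComponent) {v : C.supp}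
    (hv : ¬ HasPM ((K.induce C.supp).induce {v}ᶜ)) :
    ∃ T : Set α, T.Nonempty ∧ T.ncard + oddComps K ≤ oddComps (K.induce Tᶜ) := by
  obtain ⟨U, hvU, hU⟩ := exists_mem_ncard_add_oddComps_le (L := K.induce C.supp)
    C.connected_toSimpleGraph hv
  refine ⟨Subtype.val '' U, ⟨v, v, hvU, rfl⟩, ?_⟩
  have hcount := oddComps_induce_compl_add C (Subtype.coe_image_subset C.supp U)
  rw [oddComps_induce_induce, Set.image_val_compl] at hU
  rw [Set.ncard_image_of_injective _ Subtype.val_injective]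
  omega

lemma isBarrier_union_of_le [Finite α] (hK : HasPM K) {B : Set α} {T : Set ↥Bᶜ}
    (hT : T.ncard + B.ncard ≤ oddComps ((K.induce Bᶜ).induce Tᶜ)) :
    IsBarrier K (B ∪ Subtype.val '' T) := by
  have hcompl : Subtype.val '' Tᶜ = (B ∪ Subtype.val '' T)ᶜ := by
    rw [Set.image_val_compl, Set.compl_union, Set.sdiff_eq]
  have hdisj : Disjoint B (Subtype.val '' T) :=
    Set.disjoint_left.mpr fun _ hxB ⟨y, _, hyx⟩ => y.2 (hyx ▸ hxB)
  have hcard : (B ∪ Subtype.val '' T).ncard = T.ncard + B.ncard := by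
    rw [Set.ncard_union_eq hdisj, Set.ncard_image_of_injective _ Subtype.val_injective, add_comm]
  rw [oddComps_induce_induce, hcompl, ← hcard] at hT
  exact le_antisymm (hasPM_iff_forall_oddComps_le.mp hK _) hT

end SimpleGraph

theorem stmt3_general [Fintype V] (G : SimpleGraph V) (hpm : HasPM G) (B : Set V)
    (hB : IsBarrier G B)
    (hmax : ∀ B' : Set V, B'.Nonempty → IsBarrier G B' → B ⊆ B' → B = B') :
    ∀ c : (G.induce Bᶜ).ConnectedComponent,
      FactorCritical ((G.induce Bᶜ).induce c.supp) := by
  intro c v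
  by_contra hv
  obtain ⟨T, ⟨t, ht⟩, hT⟩ := exists_nonempty_ncard_add_oddComps_le c hv
  rw [hB] at hT
  have htB : (t : V) ∈ B ∪ Subtype.val '' T := Or.inr ⟨t, ht, rfl⟩
  rw [← hmax _ ⟨t, htB⟩ (isBarrier_union_of_le hpm hT) Set.subset_union_left] at htB
  exact t.2 htB

/-- every component of `G − B` is factor-critical for a maximal
barrier `B`. -/
theorem stmt3 [Fintype V] (G : SimpleGraph V) (hpm : HasPM G) (B : Set V)
    (hBne : B.Nonempty) (hB : IsBarrier G B)
    (hmax : ∀ B' : Set V, B'.Nonempty → IsBarrier G B' → B ⊆ B' → B = B') :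
    ∀ c : (G.induce Bᶜ).ConnectedComponent,
      FactorCritical ((G.induce Bᶜ).induce c.supp) :=
  stmt3_general G hpm B hB hmax
end

section
/- Let H be a bipartite matching covered graph with bipartition (U, W), and let u ∈ U have degree d ≥ 3. If uw1, ..., uwr (0 < r ≤ d) are nonremovable edges of H incident with u, then there exist partitions (U0, U1, ..., Ur) of U and (W0, W1, ..., Wr) of W such that u ∈ U0 and, for each i in {1, ..., r}: |Ui| = |Wi|, wi ∈ Wi, N(Wi) = Ui ∪ {u}, and uwi is the only edge between U0 and Wi. -/
/-!
Write `N(S)` for the neighbourhood of `S ⊆ W`. As `H` is connected and every edge lies in a perfect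
matching, `|N(S)| > |S|` for every nonempty proper `S ⊆ W`. If `uwᵢ` is nonremovable, then in
`H - uwᵢ` either `u` and `wᵢ` are separated, or some edge lies in no perfect matching and Hall's
theorem applies; either way some nonempty proper `S ⊆ W` has at most `|S|` neighbours in
`H - uwᵢ`. Comparing with `H` forces `|N(S)| = |S| + 1`, `wᵢ ∈ S`, and `wᵢ` to be the only
neighbour of `u` in `S`. For two such sets `S`, `T`, a third neighbour of `u` keeps `S ∪ T` proper,
and submodularity of `|N(·)|` gives `S ∩ T = ∅` and `N(S) ∩ N(T) = {u}`. Hence `Wᵢ = Sᵢ` and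
`Uᵢ = N(Sᵢ) \ {u}`, completed by the leftover vertices `U₀` and `W₀`, are the partitions.
-/

open SimpleGraph Set

universe u
variable {V : Type u}

namespace SimpleGraph

variable {G : SimpleGraph V} {S T : Set V} {u : V}

def nbhd (G : SimpleGraph V) (S : Set V) : Set V := {v | ∃ x ∈ S, G.Adj v x}

lemma nbhd_mono (h : S ⊆ T) : G.nbhd S ⊆ G.nbhd T :=
  fun _ ⟨x, hx, hadj⟩ => ⟨x, h hx, hadj⟩

lemma nbhd_union : G.nbhd (S ∪ T) = G.nbhd S ∪ G.nbhd T := by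
  ext v
  simp only [nbhd, Set.mem_union, Set.mem_ofPred_eq, or_and_right, exists_or]

lemma exists_adj_ne_ne [Fintype (G.neighborSet u)] (h : 3 ≤ G.degree u) (a b : V) :
    ∃ x, G.Adj u x ∧ x ≠ a ∧ x ≠ b := by
  classical
  have hlt : ({a, b} : Finset V).card < (G.neighborFinset u).card := by
    rw [card_neighborFinset_eq_degree]
    exact (Finset.card_le_two).trans_lt h
  obtain ⟨x, hx, hxab⟩ := Finset.exists_mem_notMem_of_card_lt_card hlt
  simp only [Finset.mem_insert, Finset.mem_singleton, not_or] at hxab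
  exact ⟨x, (G.mem_neighborFinset u x).mp hx, hxab⟩

namespace Subgraph

variable {M : G.Subgraph}

lemma IsPerfectMatching.exists_involutive (hM : M.IsPerfectMatching) :
    ∃ m : V → V, Function.Involutive m ∧ ∀ v w, M.Adj v w ↔ w = m v := by
  choose m hm hmu using isPerfectMatching_iff.mp hM
  have hadj : ∀ v w, M.Adj v w ↔ w = m v := fun v w => ⟨hmu v w, fun h => h ▸ hm v⟩
  exact ⟨m, fun v => ((hadj _ _).mp (hm v).symm).symm, hadj⟩

lemma IsPerfectMatching.ncard_lt_ncard_nbhd [Finite V] (hM : M.IsPerfectMatching)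
    {p q : V} (hp : p ∈ G.nbhd S) (hpq : M.Adj p q) (hq : q ∉ S) :
    S.ncard < (G.nbhd S).ncard := by
  obtain ⟨m, hm, hadj⟩ := hM.exists_involutive
  have hmaps : Set.MapsTo m S (G.nbhd S \ {p}) := by
    refine fun x hx => ⟨⟨x, hx, (M.adj_sub ((hadj x _).mpr rfl)).symm⟩, fun hxp => hq ?_⟩
    rw [(hadj p q).mp hpq, ← Set.mem_singleton_iff.mp hxp, hm x]
    exact hx
  calc S.ncard ≤ (G.nbhd S \ {p}).ncard := Set.ncard_le_ncard_of_injOn m hmaps hm.injective.injOn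
    _ < (G.nbhd S).ncard := Set.ncard_sdiff_singleton_lt_of_mem hp

end Subgraph

theorem exists_isMatching_verts_eq_of_forall_ncard_le [Finite V] {X Y : Set V}
    (hXY : Disjoint X Y) (hcard : Y.ncard ≤ X.ncard)
    (hall : ∀ S ⊆ X, S.ncard ≤ (G.nbhd S ∩ Y).ncard) :
    ∃ M : G.Subgraph, M.verts = X ∪ Y ∧ M.IsMatching := by
  classical
  have := Fintype.ofFinite V
  obtain ⟨f, hf, hfY⟩ := (Finset.all_card_le_biUnion_card_iff_exists_injective
      fun x : X => (Y ∩ G.neighborSet x).toFinset).mp fun s => by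
    have h := hall (Subtype.val '' (s : Set X)) (by simp)
    rw [Set.ncard_image_of_injective _ Subtype.val_injective, Set.ncard_coe_finset] at h
    convert h using 1
    rw [← Set.ncard_coe_finset]
    congr 1
    ext v
    simp [nbhd, adj_comm, and_comm]
  have hfY' : ∀ x, f x ∈ Y ∧ G.Adj x (f x) := fun x => by simpa using hfY x
  let g : X → Y := fun x => ⟨f x, (hfY' x).1⟩
  have hg : Function.Bijective g :=
    Function.Injective.bijective_of_nat_card_le (fun x y h => hf (congrArg Subtype.val h))
      (by rwa [Nat.card_coe_set_eq, Nat.card_coe_set_eq])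
  exact Subgraph.IsMatching.exists_of_disjoint_sets_of_equiv hXY (Equiv.ofBijective g hg)
    fun x => (hfY' x).2

end SimpleGraph

lemma MatchingCovered.exists_isPerfectMatching {G : SimpleGraph V} (hmc : MatchingCovered G) :
    ∃ M : G.Subgraph, M.IsPerfectMatching :=
  let ⟨e, he⟩ := hmc.2.1
  let ⟨M, hM, _⟩ := hmc.2.2 e he
  ⟨M, hM⟩

/-- `S` certifies that `uw` is not removable: in `G - uw` the neighbourhood of `S` shrinks to
`N(S) \ {u}`, which has only `|S|` elements. -/
structure IsCriticalSet (G : SimpleGraph V) (W : Set V) (u w : V) (S : Set V) : Prop where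
  subset : S ⊆ W
  mem : w ∈ S
  eq_of_adj : ∀ q ∈ S, G.Adj u q → q = w
  ncard_nbhd : (G.nbhd S).ncard = S.ncard + 1

lemma IsCriticalSet.mem_nbhd {G : SimpleGraph V} {W S : Set V} {u w : V}
    (hS : IsCriticalSet G W u w S) (huw : G.Adj u w) : u ∈ G.nbhd S :=
  ⟨w, hS.mem, huw⟩

namespace IsBipartition

variable {G G' : SimpleGraph V} {U W S T : Set V} {u w w' w₁ w₂ w₃ : V}

lemma mono (hbip : IsBipartition G U W) (h : G' ≤ G) : IsBipartition G' U W :=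
  ⟨hbip.1, hbip.2.1, fun a b hab => hbip.2.2 a b (h hab)⟩

lemma notMem_right (hbip : IsBipartition G U W) (hu : u ∈ U) : u ∉ W :=
  hbip.1.notMem_of_mem_left hu

lemma mem_right_of_adj (hbip : IsBipartition G U W) {p q : V} (hpq : G.Adj p q) (hp : p ∈ U) :
    q ∈ W :=
  (hbip.2.2 p q hpq).elim And.right fun h => absurd h.1 (hbip.notMem_right hp)

lemma mem_left_of_adj (hbip : IsBipartition G U W) {p q : V} (hpq : G.Adj p q) (hq : q ∈ W) :
    p ∈ U :=
  (hbip.2.2 p q hpq).elim And.left fun h => absurd hq (hbip.notMem_right h.2)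

lemma nbhd_subset (hbip : IsBipartition G U W) (hS : S ⊆ W) : G.nbhd S ⊆ U :=
  fun _ ⟨_, hx, hadj⟩ => hbip.mem_left_of_adj hadj (hS hx)

lemma ncard_eq [Finite V] (hbip : IsBipartition G U W) {M : G.Subgraph}
    (hM : M.IsPerfectMatching) : U.ncard = W.ncard := by
  obtain ⟨m, hm, hadj⟩ := hM.exists_involutive
  have hGm : ∀ v, G.Adj v (m v) := fun v => M.adj_sub ((hadj v _).mpr rfl)
  exact le_antisymm
    (Set.ncard_le_ncard_of_injOn m (fun p hp => hbip.mem_right_of_adj (hGm p) hp)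
      hm.injective.injOn)
    (Set.ncard_le_ncard_of_injOn m (fun q hq => hbip.mem_left_of_adj (hGm q).symm hq)
      hm.injective.injOn)

/- An edge leaving `S ∪ N(S)` starts in `N(S)`; a perfect matching through it matches `S` into
`N(S)` minus that vertex. -/
lemma ncard_lt_ncard_nbhd [Finite V] (hbip : IsBipartition G U W) (hmc : MatchingCovered G)
    (hSW : S ⊆ W) (hS : S.Nonempty) (hSW' : S ≠ W) : S.ncard < (G.nbhd S).ncard := by
  obtain ⟨q, hqW, hqS⟩ := Set.exists_of_ssubset (hSW.ssubset_of_ne hSW')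
  obtain ⟨s, hs⟩ := hS
  obtain ⟨p⟩ := hmc.1.preconnected s q
  obtain ⟨⟨⟨x, y⟩, hxy⟩, -, hx, hy⟩ := p.exists_boundary_dart (S ∪ G.nbhd S) (Or.inl hs)
    (by rintro (h | h); exacts [hqS h, hbip.notMem_right (hbip.nbhd_subset hSW h) hqW])
  simp only [Set.mem_union, not_or] at hx hy
  have hx : x ∈ G.nbhd S := hx.resolve_left fun hxS => hy.2 ⟨x, hxS, hxy.symm⟩
  obtain ⟨M, hM, hxyM⟩ := hmc.2.2 s(x, y) hxy
  exact hM.ncard_lt_ncard_nbhd hx hxyM hy.1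

lemma exists_ncard_nbhd_le_of_forall_notMem_edgeSet [Finite V] (hbip : IsBipartition G U W)
    (hUW : U.ncard = W.ncard) {a b : V} (hab : G.Adj a b) (ha : a ∈ U) (hb : b ∈ W)
    (hno : ∀ M : G.Subgraph, M.IsPerfectMatching → s(a, b) ∉ M.edgeSet) :
    ∃ S ⊆ W, b ∉ S ∧ S.Nonempty ∧ (G.nbhd S).ncard ≤ S.ncard := by
  by_contra! hcon
  have hall : ∀ S ⊆ W \ {b}, S.ncard ≤ (G.nbhd S ∩ (U \ {a})).ncard := by
    intro S hS
    rcases S.eq_empty_or_nonempty with rfl | hne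
    · simp
    have hlt := hcon S (hS.trans Set.sdiff_subset) (fun h => (hS h).2 rfl) hne
    rw [← Set.inter_sdiff_assoc,
      Set.inter_eq_left.mpr (hbip.nbhd_subset (hS.trans Set.sdiff_subset))]
    have := Set.le_ncard_sdiff {a} (G.nbhd S)
    rw [Set.ncard_singleton] at this
    omega
  obtain ⟨M, hMverts, hM⟩ := exists_isMatching_verts_eq_of_forall_ncard_le
    (hbip.1.symm.mono Set.sdiff_subset Set.sdiff_subset) (by
      rw [Set.ncard_sdiff_singleton_of_mem ha, Set.ncard_sdiff_singleton_of_mem hb, hUW]) hall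
  refine hno (M ⊔ G.subgraphOfAdj hab) ⟨hM.sup (.subgraphOfAdj hab) ?_, ?_⟩ ?_
  · rw [hM.support_eq_verts, hMverts, support_subgraphOfAdj]
    refine Set.disjoint_left.mpr ?_
    rintro v (⟨hvW, hvb⟩ | ⟨hvU, hva⟩) (rfl | rfl)
    exacts [hbip.notMem_right ha hvW, hvb rfl, hva rfl, hbip.notMem_right hvU hb]
  · intro v
    have hv : v ∈ U ∪ W := hbip.2.1 ▸ Set.mem_univ v
    simp only [Subgraph.verts_sup, hMverts, subgraphOfAdj_verts, Set.mem_union, Set.mem_sdiff,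
      Set.mem_insert_iff, Set.mem_singleton_iff] at hv ⊢
    tauto
  · rw [Subgraph.edgeSet_sup]
    exact Or.inr (by simp)

lemma exists_ncard_nbhd_le_of_not_reachable [Finite V] (hbip : IsBipartition G U W)
    (hmc : MatchingCovered G) (hu : u ∈ U) (hw : w ∈ W) (huw' : G.Adj u w') (hw' : w' ≠ w)
    (hbridge : ¬ (G.deleteEdges {s(u, w)}).Reachable u w) :
    ∃ S ⊆ W, S.Nonempty ∧ S ≠ W ∧ ((G.deleteEdges {s(u, w)}).nbhd S).ncard ≤ S.ncard := by
  set G' := G.deleteEdges {s(u, w)}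
  set S := {q ∈ W | G'.Reachable w q}
  set R := {p ∈ U | G'.Reachable w p}
  obtain ⟨M, hM⟩ := hmc.exists_isPerfectMatching
  obtain ⟨m, hm, hadj⟩ := hM.exists_involutive
  have hmaps : Set.MapsTo m R S := by
    rintro p ⟨hpU, hp⟩
    have hpm : G.Adj p (m p) := M.adj_sub ((hadj p _).mpr rfl)
    have hne : s(p, m p) ≠ s(u, w) := by
      rintro he
      rcases Sym2.eq_iff.mp he with ⟨rfl, -⟩ | ⟨rfl, -⟩
      exacts [hbridge hp.symm, hbip.notMem_right hpU hw]
    exact ⟨hbip.mem_right_of_adj hpm hpU, hp.trans (deleteEdges_adj.mpr ⟨hpm, hne⟩).reachable⟩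
  have hnbhd : G'.nbhd S ⊆ R := fun v ⟨x, ⟨hxW, hx⟩, hvx⟩ =>
    ⟨hbip.mem_left_of_adj (deleteEdges_le _ hvx) hxW, hx.trans hvx.symm.reachable⟩
  refine ⟨S, Set.sep_subset _ _, ⟨w, hw, .refl w⟩, fun hSW => ?_, ?_⟩
  · have hw'S : w' ∈ S := hSW ▸ hbip.mem_right_of_adj huw' hu
    have huw'' : G'.Adj u w' :=
      deleteEdges_adj.mpr ⟨huw', fun h => hw' (Sym2.congr_right.mp h)⟩
    exact hbridge (huw''.reachable.trans hw'S.2.symm)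
  · exact (Set.ncard_le_ncard hnbhd).trans
      (Set.ncard_le_ncard_of_injOn m hmaps hm.injective.injOn)

lemma isCriticalSet_of_ncard_nbhd_deleteEdges_le [Finite V] (hbip : IsBipartition G U W)
    (hmc : MatchingCovered G) (hu : u ∈ U) (hSW : S ⊆ W) (hS : S.Nonempty) (hSW' : S ≠ W)
    (hcard : ((G.deleteEdges {s(u, w)}).nbhd S).ncard ≤ S.ncard) :
    IsCriticalSet G W u w S := by
  set G' := G.deleteEdges {s(u, w)}
  have hsub : G.nbhd S ⊆ insert u (G'.nbhd S) := by
    rintro v ⟨x, hx, hvx⟩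
    by_cases he : s(v, x) = s(u, w)
    · rcases Sym2.eq_iff.mp he with ⟨rfl, -⟩ | ⟨-, rfl⟩
      exacts [Set.mem_insert _ _, absurd (hSW hx) (hbip.notMem_right hu)]
    · exact Or.inr ⟨x, hx, deleteEdges_adj.mpr ⟨hvx, he⟩⟩
  have hlt := hbip.ncard_lt_ncard_nbhd hmc hSW hS hSW'
  have hle := (Set.ncard_le_ncard hsub).trans (Set.ncard_insert_le u (G'.nbhd S))
  have hu' : u ∉ G'.nbhd S := fun h => by
    rw [Set.insert_eq_of_mem h] at hsub
    exact (Set.ncard_le_ncard hsub).not_gt (hcard.trans_lt hlt)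
  have hunique : ∀ q ∈ S, G.Adj u q → q = w := fun q hq huq => by
    by_contra hqw
    exact hu' ⟨q, hq, deleteEdges_adj.mpr ⟨huq, fun h => hqw (Sym2.congr_right.mp h)⟩⟩
  obtain ⟨q, hq, huq⟩ : u ∈ G.nbhd S := by
    by_contra huS
    have : G.nbhd S ⊆ G'.nbhd S := fun v hv => (hsub hv).resolve_left (by rintro rfl; exact huS hv)
    exact (Set.ncard_le_ncard this).not_gt (hcard.trans_lt hlt)
  exact ⟨hSW, hunique q hq huq ▸ hq, hunique, by omega⟩

lemma exists_isCriticalSet [Finite V] (hbip : IsBipartition G U W) (hmc : MatchingCovered G)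
    (hu : u ∈ U) (huw : G.Adj u w) (huw' : G.Adj u w') (hw' : w' ≠ w)
    (hnr : ¬ Removable G s(u, w)) : ∃ S, IsCriticalSet G W u w S := by
  set G' := G.deleteEdges {s(u, w)}
  have hw : w ∈ W := hbip.mem_right_of_adj huw hu
  suffices ∃ S ⊆ W, S.Nonempty ∧ S ≠ W ∧ (G'.nbhd S).ncard ≤ S.ncard by
    obtain ⟨S, hSW, hS, hSW', hcard⟩ := this
    exact ⟨S, hbip.isCriticalSet_of_ncard_nbhd_deleteEdges_le hmc hu hSW hS hSW' hcard⟩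
  by_cases hconn : G'.Connected
  · have hG'uw' : G'.Adj u w' :=
      deleteEdges_adj.mpr ⟨huw', fun h => hw' (Sym2.congr_right.mp h)⟩
    have hnot : ¬ ∀ e ∈ G'.edgeSet, ∃ M : G'.Subgraph, M.IsPerfectMatching ∧ e ∈ M.edgeSet :=
      fun h => hnr ⟨huw, hconn, ⟨s(u, w'), hG'uw'⟩, h⟩
    push Not at hnot
    obtain ⟨e, he, hno⟩ := hnot
    induction e using Sym2.ind with | _ a b => ?_
    rw [mem_edgeSet] at he
    have hbip' : IsBipartition G' U W := hbip.mono (deleteEdges_le _)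
    obtain ⟨M, hM⟩ := hmc.exists_isPerfectMatching
    have hUW := hbip.ncard_eq hM
    rcases hbip'.2.2 a b he with ⟨ha, hb⟩ | ⟨hb, ha⟩
    · obtain ⟨S, hSW, hbS, hS, hcard⟩ :=
        hbip'.exists_ncard_nbhd_le_of_forall_notMem_edgeSet hUW he ha hb hno
      exact ⟨S, hSW, hS, fun h => hbS (h ▸ hb), hcard⟩
    · obtain ⟨S, hSW, hbS, hS, hcard⟩ :=
        hbip'.exists_ncard_nbhd_le_of_forall_notMem_edgeSet hUW he.symm ha hb
          (by rwa [Sym2.eq_swap])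
      exact ⟨S, hSW, hS, fun h => hbS (h ▸ hb), hcard⟩
  · exact hbip.exists_ncard_nbhd_le_of_not_reachable hmc hu hw huw' hw'
      fun hr => hconn (hmc.1.connected_delete_edge_of_not_isBridge (isBridge_iff.not_left.mpr hr))

lemma disjoint_and_nbhd_inter_of_isCriticalSet [Finite V] (hbip : IsBipartition G U W)
    (hmc : MatchingCovered G) (hu : u ∈ U) (hS : IsCriticalSet G W u w₁ S)
    (hT : IsCriticalSet G W u w₂ T) (hw : w₁ ≠ w₂) (hw₁ : G.Adj u w₁) (hw₂ : G.Adj u w₂)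
    (hw₃ : G.Adj u w₃) (h₃₁ : w₃ ≠ w₁) (h₃₂ : w₃ ≠ w₂) :
    Disjoint S T ∧ G.nbhd S ∩ G.nbhd T = {u} := by
  -- `w₃` keeps `S ∪ T` proper, so submodularity of `|N(·)|` gives `|N(S) ∩ N(T)| ≤ |S ∩ T| + 1`.
  have hw₃W : w₃ ∈ W := hbip.mem_right_of_adj hw₃ hu
  have hunion := hbip.ncard_lt_ncard_nbhd hmc (Set.union_subset hS.subset hT.subset)
    ⟨w₁, Or.inl hS.mem⟩ fun h => by
      rcases (h ▸ hw₃W : w₃ ∈ S ∪ T) with h3 | h3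
      exacts [h₃₁ (hS.eq_of_adj w₃ h3 hw₃), h₃₂ (hT.eq_of_adj w₃ h3 hw₃)]
  rw [nbhd_union] at hunion
  have hN := Set.ncard_union_add_ncard_inter (G.nbhd S) (G.nbhd T)
  have hST := Set.ncard_union_add_ncard_inter S T
  have hS' := hS.ncard_nbhd
  have hT' := hT.ncard_nbhd
  have hu' : u ∈ G.nbhd S ∩ G.nbhd T := ⟨hS.mem_nbhd hw₁, hT.mem_nbhd hw₂⟩
  have hdisj : Disjoint S T := by
    rw [Set.disjoint_iff_inter_eq_empty, ← Set.not_nonempty_iff_eq_empty]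
    intro hne
    have hlt := hbip.ncard_lt_ncard_nbhd hmc (Set.inter_subset_left.trans hS.subset) hne
      fun h => h₃₁ (hS.eq_of_adj w₃ (h ▸ hw₃W).1 hw₃)
    have hsub : G.nbhd (S ∩ T) ⊆ (G.nbhd S ∩ G.nbhd T) \ {u} := by
      refine fun v hv => ⟨⟨nbhd_mono Set.inter_subset_left hv,
        nbhd_mono Set.inter_subset_right hv⟩, ?_⟩
      rintro rfl
      obtain ⟨q, ⟨hqS, hqT⟩, hvq⟩ := hv
      exact hw ((hS.eq_of_adj q hqS hvq).symm.trans (hT.eq_of_adj q hqT hvq))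
    have := Set.ncard_le_ncard hsub
    rw [Set.ncard_sdiff_singleton_of_mem hu'] at this
    omega
  refine ⟨hdisj, (Set.eq_of_subset_of_ncard_le (Set.singleton_subset_iff.mpr hu') ?_).symm⟩
  rw [Set.disjoint_iff_inter_eq_empty.mp hdisj, Set.ncard_empty] at hST
  rw [Set.ncard_singleton]
  omega

end IsBipartition

lemma pairwiseDisjoint_cons_sdiff_iUnion {r : ℕ} {X : Set V} {F : Fin r → Set V}
    (hF : Pairwise fun i j => Disjoint (F i) (F j)) :
    Set.univ.PairwiseDisjoint (Fin.cons (X \ ⋃ i, F i) F : Fin (r + 1) → Set V) := by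
  rw [Set.PairwiseDisjoint, Set.pairwise_univ, pairwise_fin_succ_iff]
  simp only [Function.onFun, Fin.cons_succ, Fin.cons_zero]
  refine ⟨fun i => ?_, fun i => ?_, hF⟩
  · exact Set.disjoint_sdiff_right.mono_left (Set.subset_iUnion F i)
  · exact Set.disjoint_sdiff_left.mono_right (Set.subset_iUnion F i)

theorem stmt12_general [Fintype V] (H : SimpleGraph V)
    [DecidableRel H.Adj] (U W : Set V)
    (hbip : IsBipartition H U W) (hmc : MatchingCovered H)
    (u : V) (hu : u ∈ U) (d : ℕ) (hd : H.degree u = d) (hd3 : 3 ≤ d)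
    (r : ℕ) (w : Fin r → V) (hwinj : Function.Injective w)
    (hadj : ∀ i, H.Adj u (w i))
    (hnonrem : ∀ i, ¬ Removable H s(u, w i)) :
    ∃ Us Ws : Fin (r + 1) → Set V,
      Set.univ.PairwiseDisjoint Us ∧ (⋃ i, Us i) = U ∧
      Set.univ.PairwiseDisjoint Ws ∧ (⋃ i, Ws i) = W ∧
      u ∈ Us 0 ∧
      ∀ i : Fin r,
        (Us i.succ).ncard = (Ws i.succ).ncard ∧
        w i ∈ Ws i.succ ∧
        {v : V | ∃ x ∈ Ws i.succ, H.Adj v x} = Us i.succ ∪ {u} ∧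
        (∀ p ∈ Us 0, ∀ q ∈ Ws i.succ, H.Adj p q → p = u ∧ q = w i) := by
  have hthird := exists_adj_ne_ne (G := H) (u := u) (hd ▸ hd3)
  choose S hS using fun i =>
    let ⟨w', hw', hw'i, _⟩ := hthird (w i) (w i)
    hbip.exists_isCriticalSet hmc hu (hadj i) hw' hw'i (hnonrem i)
  have huS i : u ∈ H.nbhd (S i) := (hS i).mem_nbhd (hadj i)
  have hcross i j (hij : i ≠ j) :
      Disjoint (S i) (S j) ∧ H.nbhd (S i) ∩ H.nbhd (S j) = {u} := by
    obtain ⟨w₃, hw₃, h₃i, h₃j⟩ := hthird (w i) (w j)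
    exact hbip.disjoint_and_nbhd_inter_of_isCriticalSet hmc hu (hS i) (hS j) (hwinj.ne hij)
      (hadj i) (hadj j) hw₃ h₃i h₃j
  set N : Fin r → Set V := fun i => H.nbhd (S i) \ {u}
  have hNdisj : Pairwise fun i j => Disjoint (N i) (N j) := fun i j hij =>
    Set.disjoint_left.mpr fun v hvi hvj => hvi.2 ((hcross i j hij).2 ▸ ⟨hvi.1, hvj.1⟩)
  have hNU : (⋃ i, N i) ⊆ U :=
    Set.iUnion_subset fun i => Set.sdiff_subset.trans (hbip.nbhd_subset (hS i).subset)
  refine ⟨Fin.cons (U \ ⋃ i, N i) N, Fin.cons (W \ ⋃ i, S i) S,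
    pairwiseDisjoint_cons_sdiff_iUnion hNdisj, by simp [Set.sdiff_union_of_subset hNU],
    pairwiseDisjoint_cons_sdiff_iUnion fun i j hij => (hcross i j hij).1,
    by simp [Set.sdiff_union_of_subset (Set.iUnion_subset fun i => (hS i).subset)],
    ⟨hu, by simp [N]⟩, fun i => ?_⟩
  simp only [Fin.cons_succ, Fin.cons_zero]
  refine ⟨?_, (hS i).mem, (Set.sdiff_union_of_subset (Set.singleton_subset_iff.mpr (huS i))).symm,
    fun p hp q hq hpq => ?_⟩
  · rw [Set.ncard_sdiff_singleton_of_mem (huS i), (hS i).ncard_nbhd, Nat.add_sub_cancel]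
  · have hpu : p = u := by
      by_contra hne
      exact hp.2 (Set.mem_iUnion.mpr ⟨i, ⟨q, hq, hpq⟩, hne⟩)
    exact ⟨hpu, (hS i).eq_of_adj q hq (hpu ▸ hpq)⟩

/-- structure of the nonremovable edges at a vertex of a
bipartite matching covered graph. -/
theorem stmt12 [Fintype V] [DecidableEq V] (H : SimpleGraph V)
    [DecidableRel H.Adj] (U W : Set V)
    (hbip : IsBipartition H U W) (hmc : MatchingCovered H)
    (u : V) (hu : u ∈ U) (d : ℕ) (hd : H.degree u = d) (hd3 : 3 ≤ d)
    (r : ℕ) (hr0 : 0 < r) (hrd : r ≤ d)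
    (w : Fin r → V) (hwW : ∀ i, w i ∈ W) (hwinj : Function.Injective w)
    (hadj : ∀ i, H.Adj u (w i))
    (hnonrem : ∀ i, ¬ Removable H s(u, w i)) :
    ∃ Us Ws : Fin (r + 1) → Set V,
      Set.univ.PairwiseDisjoint Us ∧ (⋃ i, Us i) = U ∧
      Set.univ.PairwiseDisjoint Ws ∧ (⋃ i, Ws i) = W ∧
      u ∈ Us 0 ∧
      ∀ i : Fin r,
        (Us i.succ).ncard = (Ws i.succ).ncard ∧
        w i ∈ Ws i.succ ∧
        {v : V | ∃ x ∈ Ws i.succ, H.Adj v x} = Us i.succ ∪ {u} ∧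
        (∀ p ∈ Us 0, ∀ q ∈ Ws i.succ, H.Adj p q → p = u ∧ q = w i) :=
  stmt12_general H U W hbip hmc u hu d hd hd3 r w hwinj hadj hnonrem
end
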